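/- For every invertible d×d matrix h over K there exists a unique R-algebra homomorphism σ_h : R^𝐝 → R^𝐝 such that for every f ∈ R, the power series Σ_i σ_h(f_i) t^i ∈ R^𝐝[[t^1,…,t^d]] equals the series obtained from I(f) = Σ_i f_i t^i by the substitution t^b ↦ Σ_a h^b_a t^a (the image of I(f) under the continuous R^𝐝-algebra substitution homomorphism determined by this assignment, which is well-defined since it preserves the order of power series). Moreover σ_{h·h'} = σ_h ∘ σ_{h'} for all h, h' ∈ GL_d(K) and σ_1 = id; in particular each σ_h is an automorphism, and h ↦ σ_h is a left action of GL_d(K) on R^𝐝 by R-algebra automorphisms. -/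

import Mathlib

namespace Paper

/-- Multi-indices: finitely supported functions `Fin d → ℕ`. -/
abbrev MIdx (d : ℕ) := Fin d →₀ ℕ

/-- The length `|i|` of a multi-index. -/
def deg {d : ℕ} (i : MIdx d) : ℕ := i.sum fun _ n => n

variable (K R : Type) [Field K] [CharZero K] [CommRing R] [Algebra K R]

/-- The defining relations of the algebra `R^𝐝`. -/
def relSet (d : ℕ) : Set (MvPolynomial (R × MIdx d) R) :=
  {p | (∃ f g : R, ∃ i : MIdx d,
          p = MvPolynomial.X (f + g, i) - MvPolynomial.X (f, i) - MvPolynomial.X (g, i)) ∨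
       (∃ f g : R, ∃ i : MIdx d,
          p = MvPolynomial.X (f * g, i) -
            ∑ q ∈ Finset.HasAntidiagonal.antidiagonal i, MvPolynomial.X (f, q.1) * MvPolynomial.X (g, q.2)) ∨
       (∃ f : R, p = MvPolynomial.X (f, (0 : MIdx d)) - MvPolynomial.C f) ∨
       (∃ (c : K) (i : MIdx d), 1 ≤ deg i ∧ p = MvPolynomial.X (algebraMap K R c, i))}

/-- The commutative `R`-algebra `R^𝐝` generated by the symbols `f_i`. -/
def Rd (d : ℕ) : Type :=
  MvPolynomial (R × MIdx d) R ⧸ Ideal.span (relSet K R d)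

noncomputable instance (d : ℕ) : CommRing (Rd K R d) := Ideal.Quotient.commRing _
noncomputable instance (d : ℕ) : Algebra R (Rd K R d) := Ideal.Quotient.algebra R
noncomputable instance (d : ℕ) : Algebra K (Rd K R d) := Ideal.Quotient.algebra K

/-- The generator `f_i` of `R^𝐝`. -/
noncomputable def gen {d : ℕ} (f : R) (i : MIdx d) : Rd K R d :=
  Ideal.Quotient.mk (Ideal.span (relSet K R d)) (MvPolynomial.X (f, i))

/-- The Taylor series `I(f) = Σ_i f_i t^i ∈ R^𝐝[[t^1,…,t^d]]`. -/
noncomputable def Ifun {d : ℕ} (f : R) : MvPowerSeries (Fin d) (Rd K R d) :=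
  fun i => gen K R f i

end Paper

namespace Paper

/-- The coefficient at `t^k` of the series obtained from `F` by the linear
substitution `t^b ↦ Σ_a h^b_a t^a` (coefficients of `K` mapped into `A` by `κ`).
Since the substitution is homogeneous, only multi-indices `m` with `|m| = |k|`
contribute. -/
noncomputable def substCoeff {K A : Type} [Field K] [CommRing A] {d : ℕ} (κ : K →+* A)
    (h : Matrix (Fin d) (Fin d) K) (F : MvPowerSeries (Fin d) A) (k : MIdx d) : A :=
  ∑ m ∈ Finset.finsuppAntidiag (Finset.univ : Finset (Fin d)) (deg k),
    MvPowerSeries.coeff m F *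
      MvPolynomial.coeff k
        (∏ c : Fin d,
          (∑ a : Fin d, MvPolynomial.C (κ (h c a)) * MvPolynomial.X a) ^ (m c))

end Paper

/-! Linear substitution `t ↦ h t` is an algebra endomorphism of `A[[t]]` (Mathlib's `subst`), and
the relations defining `R^𝐝` say precisely that `I` is a ring homomorphism `R → R^𝐝[[t]]` with
constant term `f` sending `K` to constants. Composing the two gives another such homomorphism, and
the universal property of `R^𝐝` turns it into `σ_h`. Since `σ_h` fixes the coefficients of the
substitution, applying it coefficientwise commutes with substitution; together with
`F(h t)(h' t) = F(h h' t)` this gives `σ_h ∘ σ_{h'} = σ_{h h'}`. -/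

namespace MvPolynomial

variable {ι A B : Type*} [Fintype ι] [CommRing A] [CommRing B]

noncomputable def linForm (M : Matrix ι ι A) (i : ι) : MvPolynomial ι A :=
  ∑ j, C (M i j) * X j

lemma isHomogeneous_linForm (M : Matrix ι ι A) (i : ι) : (linForm M i).IsHomogeneous 1 :=
  IsHomogeneous.sum _ _ _ fun j _ => isHomogeneous_C_mul_X _ j

lemma isHomogeneous_prod_linForm_pow (M : Matrix ι ι A) (m : ι →₀ ℕ) :
    (∏ i, linForm M i ^ m i).IsHomogeneous m.degree := by
  rw [Finsupp.degree_eq_sum]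
  simpa using IsHomogeneous.prod Finset.univ (fun i => linForm M i ^ m i) (fun i => m i)
    fun i _ => by simpa using (isHomogeneous_linForm M i).pow (m i)

lemma linForm_one [DecidableEq ι] (i : ι) : linForm (1 : Matrix ι ι A) i = X i := by
  simp [linForm, Matrix.one_apply]

lemma aeval_linForm_linForm (M M' : Matrix ι ι A) (i : ι) :
    aeval (linForm M') (linForm M i) = linForm (M * M') i := by
  simp only [linForm, map_sum, map_mul, aeval_C, aeval_X, algebraMap_eq, Finset.mul_sum]
  simp only [← mul_assoc, ← C_mul, Matrix.mul_apply, map_sum, Finset.sum_mul]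
  exact Finset.sum_comm

lemma map_linForm (f : A →+* B) (M : Matrix ι ι A) (i : ι) :
    map f (linForm M i) = linForm (M.map f) i := by
  simp [linForm]

lemma coe_aeval_linForm (M : Matrix ι ι A) (p : MvPolynomial ι A) :
    ((aeval (linForm M) p : MvPolynomial ι A) : MvPowerSeries ι A) =
      aeval (fun i => (linForm M i : MvPowerSeries ι A)) p := by
  simpa using comp_aeval_apply (f := linForm M) (coeToMvPowerSeries.algHom A) p

end MvPolynomial

namespace MvPowerSeries

open MvPolynomial (linForm isHomogeneous_linForm)

variable {ι A B : Type*} [Fintype ι] [CommRing A] [CommRing B]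

lemma hasSubst_linForm (M : Matrix ι ι A) :
    HasSubst fun i => (linForm M i : MvPowerSeries ι A) :=
  hasSubst_of_constantCoeff_zero fun i => by
    rw [← coeff_zero_eq_constantCoeff_apply, MvPolynomial.coeff_coe,
      (isHomogeneous_linForm M i).coeff_eq_zero (by simp)]

noncomputable def linSubst (M : Matrix ι ι A) : MvPowerSeries ι A →ₐ[A] MvPowerSeries ι A :=
  substAlgHom (hasSubst_linForm M)

lemma linSubst_apply (M : Matrix ι ι A) (F : MvPowerSeries ι A) :
    linSubst M F = subst (fun i => (linForm M i : MvPowerSeries ι A)) F :=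
  substAlgHom_apply _ F

lemma linSubst_C (M : Matrix ι ι A) (a : A) : linSubst M (C a) = C a := by
  rw [linSubst_apply, subst_C]

lemma linSubst_linSubst (M M' : Matrix ι ι A) (F : MvPowerSeries ι A) :
    linSubst M' (linSubst M F) = linSubst (M * M') F := by
  simp only [linSubst_apply]
  rw [subst_comp_subst_apply (hasSubst_linForm M) (hasSubst_linForm M')]
  congr 1
  funext i
  rw [subst_coe, ← MvPolynomial.coe_aeval_linForm, MvPolynomial.aeval_linForm_linForm]

lemma linSubst_one [DecidableEq ι] (F : MvPowerSeries ι A) : linSubst 1 F = F := by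
  simp only [linSubst_apply, MvPolynomial.linForm_one, MvPolynomial.coe_X, subst_self, id]

lemma map_linSubst (f : A →+* B) (M : Matrix ι ι A) (F : MvPowerSeries ι A) :
    map f (linSubst M F) = linSubst (M.map f) (map f F) := by
  simp only [linSubst_apply]
  rw [map_subst (hasSubst_linForm M)]
  congr 1
  funext i
  ext n
  rw [coeff_map, MvPolynomial.coeff_coe, MvPolynomial.coeff_coe, ← MvPolynomial.map_linForm,
    MvPolynomial.coeff_map]

lemma coeff_linSubst [DecidableEq ι] (M : Matrix ι ι A) (F : MvPowerSeries ι A) (k : ι →₀ ℕ) :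
    coeff k (linSubst M F) =
      ∑ m ∈ Finset.finsuppAntidiag Finset.univ k.degree,
        coeff m F * MvPolynomial.coeff k (∏ i, linForm M i ^ m i) := by
  have hprod (m : ι →₀ ℕ) : (m.prod fun i e => (linForm M i : MvPowerSeries ι A) ^ e) =
      ((∏ i, linForm M i ^ m i : MvPolynomial ι A) : MvPowerSeries ι A) := by
    simp only [Finsupp.prod_fintype _ _ fun _ => pow_zero _,
      ← MvPolynomial.coeToMvPowerSeries.ringHom_apply, map_prod, map_pow]
  rw [linSubst_apply, coeff_subst (hasSubst_linForm M)]
  simp only [hprod, MvPolynomial.coeff_coe, smul_eq_mul]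
  refine finsum_eq_sum_of_support_subset _ fun m hm => ?_
  have hk : k.degree = m.degree := by
    by_contra hne
    apply hm
    dsimp only
    rw [(MvPolynomial.isHomogeneous_prod_linForm_pow M m).coeff_eq_zero hne, mul_zero]
  simp [hk, Finsupp.degree_eq_sum]

lemma constantCoeff_linSubst (M : Matrix ι ι A) (F : MvPowerSeries ι A) :
    constantCoeff (linSubst M F) = constantCoeff F := by
  classical
  rw [← coeff_zero_eq_constantCoeff_apply, coeff_linSubst]
  simp

end MvPowerSeries

namespace Paper

open MvPowerSeries

lemma substCoeff_eq_coeff_linSubst {K A : Type} [Field K] [CommRing A] {d : ℕ} (κ : K →+* A)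
    (h : Matrix (Fin d) (Fin d) K) (F : MvPowerSeries (Fin d) A) (k : MIdx d) :
    substCoeff κ h F k = coeff k (linSubst (h.map κ) F) := by
  rw [coeff_linSubst]
  rfl

variable {K R : Type} [Field K] [CommRing R] [Algebra K R] {d : ℕ}

lemma mk_eq_zero_of_mem_relSet {p : MvPolynomial (R × MIdx d) R} (hp : p ∈ relSet K R d) :
    Ideal.Quotient.mk (Ideal.span (relSet K R d)) p = 0 :=
  Ideal.Quotient.eq_zero_iff_mem.mpr (Ideal.subset_span hp)

lemma gen_add (f g : R) (i : MIdx d) : gen K R (f + g) i = gen K R f i + gen K R g i := by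
  have h := mk_eq_zero_of_mem_relSet (K := K) (d := d) (Or.inl ⟨f, g, i, rfl⟩)
  rwa [map_sub, map_sub, sub_sub, sub_eq_zero] at h

lemma gen_mul (f g : R) (i : MIdx d) :
    gen K R (f * g) i =
      ∑ q ∈ Finset.HasAntidiagonal.antidiagonal i, gen K R f q.1 * gen K R g q.2 := by
  have h := mk_eq_zero_of_mem_relSet (K := K) (d := d) (Or.inr (Or.inl ⟨f, g, i, rfl⟩))
  simp only [map_sub, sub_eq_zero, map_sum, map_mul] at h
  exact h

lemma gen_zero (f : R) : gen K R f (0 : MIdx d) = algebraMap R (Rd K R d) f := by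
  have h := mk_eq_zero_of_mem_relSet (K := K) (d := d) (Or.inr (Or.inr (Or.inl ⟨f, rfl⟩)))
  rwa [map_sub, sub_eq_zero] at h

lemma gen_algebraMap (c : K) {i : MIdx d} (hi : i ≠ 0) : gen K R (algebraMap K R c) i = 0 :=
  mk_eq_zero_of_mem_relSet (Or.inr (Or.inr (Or.inr
    ⟨c, i, Nat.one_le_iff_ne_zero.mpr ((Finsupp.degree_eq_zero_iff i).not.mpr hi), rfl⟩)))

lemma coeff_Ifun (f : R) (i : MIdx d) : coeff i (Ifun K R f) = gen K R f i := rfl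

lemma Ifun_algebraMap (c : K) :
    Ifun K R (d := d) (algebraMap K R c) = C (algebraMap R (Rd K R d) (algebraMap K R c)) := by
  ext i
  rw [coeff_Ifun, coeff_C]
  split_ifs with hi
  · rw [hi, gen_zero]
  · exact gen_algebraMap c hi

variable (K R d) in
noncomputable def taylor : R →+* MvPowerSeries (Fin d) (Rd K R d) :=
  RingHom.mk'
    { toFun := Ifun K R
      map_one' := by simpa using Ifun_algebraMap (K := K) (R := R) (d := d) 1
      map_mul' := fun f g => by ext i; rw [coeff_mul]; exact gen_mul f g i }
    fun f g => by ext i; exact gen_add f g i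

lemma taylor_apply (f : R) : taylor K R d f = Ifun K R f := rfl

lemma constantCoeff_taylor (f : R) :
    constantCoeff (taylor K R d f) = algebraMap R (Rd K R d) f :=
  gen_zero f

namespace Rd

section lift

variable {B : Type} [CommRing B] [Algebra R B]

noncomputable def lift (T : R →+* MvPowerSeries (Fin d) B)
    (hT₀ : ∀ f, constantCoeff (T f) = algebraMap R B f)
    (hTK : ∀ c : K, T (algebraMap K R c) = C (algebraMap R B (algebraMap K R c))) :
    Rd K R d →ₐ[R] B :=
  Ideal.Quotient.liftₐ _ (MvPolynomial.aeval fun p => coeff p.2 (T p.1)) fun a ha => by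
    refine RingHom.mem_ker.mp <| (Ideal.span_le (I := RingHom.ker _)).mpr ?_ ha
    rintro p (⟨f, g, i, rfl⟩ | ⟨f, g, i, rfl⟩ | ⟨f, rfl⟩ | ⟨c, i, hi, rfl⟩) <;>
      rw [SetLike.mem_coe, RingHom.mem_ker]
    · simp only [map_sub, MvPolynomial.aeval_X, map_add, sub_sub, sub_self]
    · simp only [map_sub, map_sum, MvPolynomial.aeval_X, map_mul, coeff_mul, sub_self]
    · simp only [map_sub, MvPolynomial.aeval_X, MvPolynomial.aeval_C,
        coeff_zero_eq_constantCoeff_apply, hT₀, sub_self]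
    · rw [MvPolynomial.aeval_X, hTK, coeff_C, if_neg]
      rintro rfl
      simp [deg] at hi

lemma lift_gen (T : R →+* MvPowerSeries (Fin d) B)
    (hT₀ : ∀ f, constantCoeff (T f) = algebraMap R B f)
    (hTK : ∀ c : K, T (algebraMap K R c) = C (algebraMap R B (algebraMap K R c)))
    (f : R) (i : MIdx d) :
    lift T hT₀ hTK (gen K R f i) = coeff i (T f) :=
  MvPolynomial.aeval_X _ (f, i)

lemma algHom_ext {φ ψ : Rd K R d →ₐ[R] B}
    (h : ∀ (f : R) (i : MIdx d), φ (gen K R f i) = ψ (gen K R f i)) : φ = ψ :=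
  Ideal.Quotient.algHom_ext R (MvPolynomial.algHom_ext fun p => h p.1 p.2)

end lift

variable (R) in
noncomputable def scalars (h : Matrix (Fin d) (Fin d) K) : Matrix (Fin d) (Fin d) (Rd K R d) :=
  h.map ((algebraMap R (Rd K R d)).comp (algebraMap K R))

lemma scalars_mul (h h' : Matrix (Fin d) (Fin d) K) :
    scalars R (h * h') = scalars R h * scalars R h' :=
  Matrix.map_mul

lemma map_scalars (φ : Rd K R d →ₐ[R] Rd K R d) (h : Matrix (Fin d) (Fin d) K) :
    (scalars R h).map φ = scalars R h := by
  ext i j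
  simp [scalars]

noncomputable def substHom (h : Matrix (Fin d) (Fin d) K) : Rd K R d →ₐ[R] Rd K R d :=
  lift ((linSubst (scalars R h)).toRingHom.comp (taylor K R d))
    (fun f => by simp [constantCoeff_linSubst, constantCoeff_taylor])
    (fun c => by simp [taylor_apply, Ifun_algebraMap, linSubst_C])

lemma substHom_gen (h : Matrix (Fin d) (Fin d) K) (f : R) (k : MIdx d) :
    substHom h (gen K R f k) = coeff k (linSubst (scalars R h) (taylor K R d f)) :=
  lift_gen _ _ _ f k

lemma substHom_gen_eq_substCoeff (h : Matrix (Fin d) (Fin d) K) (f : R) (k : MIdx d) :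
    substHom h (gen K R f k) =
      substCoeff ((algebraMap R (Rd K R d)).comp (algebraMap K R)) h (Ifun K R f) k := by
  rw [substHom_gen, substCoeff_eq_coeff_linSubst]
  rfl

lemma map_substHom_taylor (h : Matrix (Fin d) (Fin d) K) (f : R) :
    map ((substHom h : Rd K R d →ₐ[R] Rd K R d) : Rd K R d →+* Rd K R d) (taylor K R d f) =
      linSubst (scalars R h) (taylor K R d f) := by
  ext k
  rw [coeff_map, ← substHom_gen]
  rfl

lemma substHom_mul (h h' : Matrix (Fin d) (Fin d) K) :
    substHom (R := R) (h * h') = (substHom h).comp (substHom h') := by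
  refine algHom_ext fun f k => ?_
  rw [AlgHom.comp_apply, substHom_gen, substHom_gen]
  change _ = ((substHom h : Rd K R d →ₐ[R] Rd K R d) : Rd K R d →+* Rd K R d) _
  rw [← coeff_map, map_linSubst, AlgHom.coe_toRingHom, map_scalars, map_substHom_taylor,
    linSubst_linSubst, scalars_mul]

lemma substHom_one :
    substHom (R := R) (1 : Matrix (Fin d) (Fin d) K) = AlgHom.id R (Rd K R d) := by
  refine algHom_ext fun f k => ?_
  rw [substHom_gen, scalars, Matrix.map_one _ (map_zero _) (map_one _), linSubst_one]
  rfl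

lemma substHom_bijective (h : (Matrix (Fin d) (Fin d) K)ˣ) :
    Function.Bijective (substHom (R := R) h.val) :=
  (AlgEquiv.ofAlgHom (substHom h.val) (substHom h⁻¹.val)
    (by rw [← substHom_mul, Units.mul_inv, substHom_one])
    (by rw [← substHom_mul, Units.inv_mul, substHom_one])).bijective

end Rd

end Paper

theorem statement3_general (K R : Type) [Field K] [CommRing R] [Algebra K R]
    (d : ℕ) :
    ∃ σ : (Matrix (Fin d) (Fin d) K)ˣ → (Paper.Rd K R d →ₐ[R] Paper.Rd K R d),
      (∀ (h : (Matrix (Fin d) (Fin d) K)ˣ) (f : R) (k : Paper.MIdx d),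
          σ h (Paper.gen K R f k) =
            Paper.substCoeff ((algebraMap R (Paper.Rd K R d)).comp (algebraMap K R))
              h.val (Paper.Ifun K R f) k) ∧
      (∀ (h : (Matrix (Fin d) (Fin d) K)ˣ) (τ : Paper.Rd K R d →ₐ[R] Paper.Rd K R d),
          (∀ (f : R) (k : Paper.MIdx d),
            τ (Paper.gen K R f k) =
              Paper.substCoeff ((algebraMap R (Paper.Rd K R d)).comp (algebraMap K R))
                h.val (Paper.Ifun K R f) k) → τ = σ h) ∧
      (∀ h h' : (Matrix (Fin d) (Fin d) K)ˣ, σ (h * h') = (σ h).comp (σ h')) ∧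
      (σ 1 = AlgHom.id R (Paper.Rd K R d)) ∧
      (∀ h, Function.Bijective (σ h)) :=
  ⟨fun h => Paper.Rd.substHom h.val,
    fun h => Paper.Rd.substHom_gen_eq_substCoeff h.val,
    fun h _ hτ => Paper.Rd.algHom_ext fun f k => by
      rw [hτ, Paper.Rd.substHom_gen_eq_substCoeff],
    fun h h' => Paper.Rd.substHom_mul h.val h'.val,
    Paper.Rd.substHom_one,
    Paper.Rd.substHom_bijective⟩

/-- For every `h ∈ GL_d(K)` there is a unique `R`-algebra
homomorphism `σ_h : R^𝐝 → R^𝐝` with `Σ_i σ_h(f_i)t^i = I(f)(h·t)`; moreover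
`h ↦ σ_h` is a left action of `GL_d(K)` on `R^𝐝` by `R`-algebra automorphisms. -/
theorem statement3 (K R : Type) [Field K] [CharZero K] [CommRing R] [Algebra K R]
    (d : ℕ) (hd : 1 ≤ d) :
    ∃ σ : (Matrix (Fin d) (Fin d) K)ˣ → (Paper.Rd K R d →ₐ[R] Paper.Rd K R d),
      (∀ (h : (Matrix (Fin d) (Fin d) K)ˣ) (f : R) (k : Paper.MIdx d),
          σ h (Paper.gen K R f k) =
            Paper.substCoeff ((algebraMap R (Paper.Rd K R d)).comp (algebraMap K R))
              h.val (Paper.Ifun K R f) k) ∧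
      (∀ (h : (Matrix (Fin d) (Fin d) K)ˣ) (τ : Paper.Rd K R d →ₐ[R] Paper.Rd K R d),
          (∀ (f : R) (k : Paper.MIdx d),
            τ (Paper.gen K R f k) =
              Paper.substCoeff ((algebraMap R (Paper.Rd K R d)).comp (algebraMap K R))
                h.val (Paper.Ifun K R f) k) → τ = σ h) ∧
      (∀ h h' : (Matrix (Fin d) (Fin d) K)ˣ, σ (h * h') = (σ h).comp (σ h')) ∧
      (σ 1 = AlgHom.id R (Paper.Rd K R d)) ∧
      (∀ h, Function.Bijective (σ h)) :=
  statement3_general K R d
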